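/- Let Ω ⊆ ℝ^d be a compact set, let x_1,…,x_N ∈ Ω, and suppose φ_1,…,φ_N : Ω → ℝ are continuous and provide a stable local polynomial reproduction of degree m ∈ ℕ with constants C1, C2 and fill distance h, with δ := 2 C2 h. Let y_1,…,y_N ∈ Ω be such that the matrix Φ = (φ_j(y_i)) is invertible, and let P be the interpolation operator on C(Ω) given by P u = ∑_j c_j φ_j with Φ c = (u(y_i))_i, so that c_P := C1 ‖Φ^{-1}‖_∞ bounds ‖P‖. Then for every u ∈ C(Ω), ‖P u − u‖_∞ ≤ (1 + c_P) C1 ω(u, δ), where ω(u, δ) := sup{ |u(y) − u(z)| : y, z ∈ Ω, ‖y − z‖₂ ≤ δ }. -/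

import Mathlib

/-!
The MLS approximant `û = ∑ j, u (x j) • φ j` is fixed by the interpolation operator `P`, so
`P u - u = P (u - û) - (u - û)` and `‖P u - u‖ ≤ (1 + ‖P‖) ‖u - û‖`. Reproduction of constants makes
the `φ j` a partition of unity, so `u z - û z = ∑ j, φ j z (u z - u (x j))`; only the `j` with
`‖z - x j‖ ≤ δ` contribute, which gives `‖u - û‖ ≤ C1 ω(u, δ)`. Finally `‖P‖ ≤ C1 ‖Φ⁻¹‖_∞`, bounding
the coefficients by the maximal row sum of `Φ⁻¹` and then using stability of the `φ j`.
-/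

open scoped BigOperators Matrix

theorem norm_map_sub_le_of_map_eq {E F : Type*} [SeminormedAddCommGroup E] [FunLike F E E]
    [AddMonoidHomClass F E E] (P : F) {K : ℝ} (hP : ∀ w, ‖P w‖ ≤ K * ‖w‖) {v : E} (hv : P v = v)
    (u : E) : ‖P u - u‖ ≤ (1 + K) * ‖u - v‖ :=
  calc ‖P u - u‖ = ‖P (u - v) - (u - v)‖ := by rw [map_sub, hv, sub_sub_sub_cancel_right]
    _ ≤ ‖P (u - v)‖ + ‖u - v‖ := norm_sub_le _ _
    _ ≤ (1 + K) * ‖u - v‖ := by linarith [hP (u - v)]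

theorem abs_mulVec_le {ι κ : Type*} [Fintype κ] (A : Matrix ι κ ℝ) {w : κ → ℝ} {M : ℝ}
    (hw : ∀ k, |w k| ≤ M) (i : ι) : |(A *ᵥ w) i| ≤ (∑ k, |A i k|) * M :=
  calc |(A *ᵥ w) i| ≤ ∑ k, |A i k * w k| := Finset.abs_sum_le_sum_abs _ _
    _ ≤ ∑ k, |A i k| * M := Finset.sum_le_sum fun k _ => by
        rw [abs_mul]; exact mul_le_mul_of_nonneg_left (hw k) (abs_nonneg _)
    _ = (∑ k, |A i k|) * M := (Finset.sum_mul _ _ _).symm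

section FunctionsOnSubset

variable {E : Type*} [SeminormedAddCommGroup E] {Ω : Set E}

noncomputable def modulusOfContinuity (u : C(Ω, ℝ)) (δ : ℝ) : ℝ :=
  sSup {t | ∃ y z : Ω, ‖(y : E) - z‖ ≤ δ ∧ t = |u y - u z|}

theorem modulusOfContinuity_nonneg (u : C(Ω, ℝ)) (δ : ℝ) : 0 ≤ modulusOfContinuity u δ :=
  Real.sSup_nonneg <| by
    rintro t ⟨y, z, -, rfl⟩
    exact abs_nonneg _

variable [CompactSpace Ω]

theorem abs_sub_le_modulusOfContinuity (u : C(Ω, ℝ)) {δ : ℝ} {y z : Ω}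
    (hyz : ‖(y : E) - z‖ ≤ δ) : |u y - u z| ≤ modulusOfContinuity u δ := by
  refine le_csSup ⟨2 * ‖u‖, ?_⟩ ⟨y, z, hyz, rfl⟩
  rintro t ⟨y', z', -, rfl⟩
  exact Real.dist_eq (u y') (u z') ▸ u.dist_le_two_norm y' z'

variable [Nonempty Ω] {ι : Type*} [Fintype ι] {φ : ι → C(Ω, ℝ)} {C1 : ℝ}

theorem norm_sub_sum_smul_le_modulusOfContinuity (x : ι → Ω) {δ : ℝ}
    (hone : ∀ z, ∑ j, φ j z = 1) (hstab : ∀ z, ∑ j, |φ j z| ≤ C1)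
    (hloc : ∀ j, ∀ z : Ω, δ < ‖(z : E) - x j‖ → φ j z = 0) (u : C(Ω, ℝ)) :
    ‖u - ∑ j, u (x j) • φ j‖ ≤ C1 * modulusOfContinuity u δ := by
  refine (ContinuousMap.norm_le_of_nonempty _).mpr fun z => ?_
  have hterm : ∀ j, |φ j z| * |u z - u (x j)| ≤ |φ j z| * modulusOfContinuity u δ := by
    intro j
    by_cases hj : φ j z = 0
    · simp [hj]
    · exact mul_le_mul_of_nonneg_left
        (abs_sub_le_modulusOfContinuity u (not_lt.mp (mt (hloc j z) hj))) (abs_nonneg _)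
  have hsplit : u z - (∑ j, u (x j) • φ j) z = ∑ j, φ j z * (u z - u (x j)) := by
    simp only [ContinuousMap.sum_apply, ContinuousMap.smul_apply, smul_eq_mul, mul_sub,
      Finset.sum_sub_distrib, ← Finset.sum_mul, hone, one_mul]
    exact congrArg (u z - ·) (Finset.sum_congr rfl fun j _ => mul_comm _ _)
  calc ‖(u - ∑ j, u (x j) • φ j) z‖ = |∑ j, φ j z * (u z - u (x j))| := by
        rw [ContinuousMap.sub_apply, Real.norm_eq_abs, hsplit]
    _ ≤ ∑ j, |φ j z| * |u z - u (x j)| := 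
        (Finset.abs_sum_le_sum_abs _ _).trans_eq (Finset.sum_congr rfl fun j _ => abs_mul _ _)
    _ ≤ ∑ j, |φ j z| * modulusOfContinuity u δ := Finset.sum_le_sum fun j _ => hterm j
    _ ≤ C1 * modulusOfContinuity u δ := by
        rw [← Finset.sum_mul]
        exact mul_le_mul_of_nonneg_right (hstab z) (modulusOfContinuity_nonneg u δ)

theorem norm_sum_smul_le (hstab : ∀ z, ∑ j, |φ j z| ≤ C1) {a : ι → ℝ} {M : ℝ}
    (ha : ∀ j, |a j| ≤ M) (hM : 0 ≤ M) : ‖∑ j, a j • φ j‖ ≤ C1 * M := by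
  refine (ContinuousMap.norm_le_of_nonempty _).mpr fun z => ?_
  calc ‖(∑ j, a j • φ j) z‖ = |∑ j, a j * φ j z| := by simp [Real.norm_eq_abs]
    _ ≤ ∑ j, |a j| * |φ j z| := 
        (Finset.abs_sum_le_sum_abs _ _).trans_eq (Finset.sum_congr rfl fun j _ => abs_mul _ _)
    _ ≤ ∑ j, M * |φ j z| :=
        Finset.sum_le_sum fun j _ => mul_le_mul_of_nonneg_right (ha j) (abs_nonneg _)
    _ ≤ C1 * M := by
        rw [← Finset.mul_sum, mul_comm C1]
        exact mul_le_mul_of_nonneg_left (hstab z) hM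

theorem norm_sum_mulVec_smul_le {κ : Type*} [Fintype κ] (hstab : ∀ z, ∑ j, |φ j z| ≤ C1)
    (A : Matrix ι κ ℝ) (y : κ → Ω) (v : C(Ω, ℝ)) :
    ‖∑ j, (A *ᵥ fun i => v (y i)) j • φ j‖ ≤ C1 * (⨆ i, ∑ k, |A i k|) * ‖v‖ := by
  have hrow : ∀ j, ∑ k, |A j k| ≤ ⨆ i, ∑ k, |A i k| :=
    le_ciSup (f := fun i => ∑ k, |A i k|) (Set.finite_range _).bddAbove
  rw [mul_assoc]
  refine norm_sum_smul_le hstab (fun j => ?_)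
    (mul_nonneg (Real.iSup_nonneg fun i => Finset.sum_nonneg fun k _ => abs_nonneg _)
      (norm_nonneg v))
  exact (abs_mulVec_le A (fun k => v.norm_coe_le_norm (y k)) j).trans
    (mul_le_mul_of_nonneg_right (hrow j) (norm_nonneg v))

end FunctionsOnSubset

theorem sum_smul_apply_eq_mulVec {X ι κ : Type*} [TopologicalSpace X] [Fintype ι]
    (φ : ι → C(X, ℝ)) (y : κ → X) {Φ : Matrix κ ι ℝ} (hΦ : ∀ i j, Φ i j = φ j (y i))
    (a : ι → ℝ) : (fun i => (∑ j, a j • φ j) (y i)) = Φ *ᵥ a := by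
  funext i
  simp [Matrix.mulVec, dotProduct, hΦ, mul_comm]

theorem stmt_5_general
    {d N : ℕ} (Ω : Set (EuclideanSpace ℝ (Fin d))) [CompactSpace Ω]
    (x : Fin N → Ω)
    (φ : Fin N → C(Ω, ℝ))
    (m : ℕ) (C1 δ : ℝ)
    (hrep : ∀ p : MvPolynomial (Fin d) ℝ, p.totalDegree ≤ m →
      ∀ z : Ω, ∑ j, φ j z * MvPolynomial.eval (fun i => (x j : EuclideanSpace ℝ (Fin d)) i) p
        = MvPolynomial.eval (fun i => (z : EuclideanSpace ℝ (Fin d)) i) p)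
    (hstab : ∀ z : Ω, ∑ j, |φ j z| ≤ C1)
    (hloc : ∀ j, ∀ z : Ω, δ < ‖(z : EuclideanSpace ℝ (Fin d)) - x j‖ → φ j z = 0)
    (y : Fin N → Ω)
    (Φ : Matrix (Fin N) (Fin N) ℝ) (hΦdef : ∀ i j, Φ i j = φ j (y i))
    (hΦ : IsUnit Φ.det)
    (T : C(Ω, ℝ) →L[ℝ] C(Ω, ℝ))
    (hT : ∀ u : C(Ω, ℝ), T u = ∑ j, (Φ⁻¹ *ᵥ fun i => u (y i)) j • φ j) :
    ∀ u : C(Ω, ℝ), ‖T u - u‖ ≤ (1 + C1 * (⨆ i, ∑ j, |Φ⁻¹ i j|)) * C1 *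
      sSup {t | ∃ y' z' : Ω, ‖(y' : EuclideanSpace ℝ (Fin d)) - z'‖ ≤ δ ∧
        t = |u y' - u z'|} := by
  intro u
  rcases isEmpty_or_nonempty Ω with hΩ | hΩ
  · simp [Subsingleton.elim (T u - u) 0]
  have hone : ∀ z, ∑ j, φ j z = 1 := fun z => by simpa using hrep 1 (by simp) z
  have hC1 : 0 ≤ C1 :=
    (Finset.sum_nonneg fun j _ => abs_nonneg _).trans (hstab (Classical.arbitrary Ω))
  have hc : 0 ≤ ⨆ i, ∑ j, |Φ⁻¹ i j| :=
    Real.iSup_nonneg fun i => Finset.sum_nonneg fun j _ => abs_nonneg _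
  have hT_le : ∀ v, ‖T v‖ ≤ C1 * (⨆ i, ∑ j, |Φ⁻¹ i j|) * ‖v‖ := fun v =>
    hT v ▸ norm_sum_mulVec_smul_le hstab Φ⁻¹ y v
  have hfix : T (∑ j, u (x j) • φ j) = ∑ j, u (x j) • φ j := by
    rw [hT, sum_smul_apply_eq_mulVec φ y hΦdef, Matrix.mulVec_mulVec,
      Matrix.nonsing_inv_mul Φ hΦ, Matrix.one_mulVec]
  calc ‖T u - u‖ ≤ (1 + C1 * (⨆ i, ∑ j, |Φ⁻¹ i j|)) * ‖u - ∑ j, u (x j) • φ j‖ :=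
        norm_map_sub_le_of_map_eq T hT_le hfix u
    _ ≤ (1 + C1 * (⨆ i, ∑ j, |Φ⁻¹ i j|)) * (C1 * modulusOfContinuity u δ) := by
        gcongr
        exact norm_sub_sum_smul_le_modulusOfContinuity x hone hstab hloc u
    _ = _ := by rw [modulusOfContinuity, mul_assoc]

/-- for the MLS-based interpolation operator P with ‖P‖ ≤ c_P = C1‖Φ⁻¹‖_∞,
one has ‖P u − u‖_∞ ≤ (1 + c_P) C1 ω(u, δ) for every continuous u. -/
theorem stmt_5
    {d N : ℕ} (Ω : Set (EuclideanSpace ℝ (Fin d))) (hΩ : IsCompact Ω) [CompactSpace Ω]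
    (x : Fin N → Ω)
    (φ : Fin N → C(Ω, ℝ))
    (m : ℕ) (C1 C2 h δ : ℝ)
    (hC1 : 0 < C1) (hC2 : 0 < C2) (hh : 0 < h) (hδ : δ = 2 * C2 * h)
    (hrep : ∀ p : MvPolynomial (Fin d) ℝ, p.totalDegree ≤ m →
      ∀ z : Ω, ∑ j, φ j z * MvPolynomial.eval (fun i => (x j : EuclideanSpace ℝ (Fin d)) i) p
        = MvPolynomial.eval (fun i => (z : EuclideanSpace ℝ (Fin d)) i) p)
    (hstab : ∀ z : Ω, ∑ j, |φ j z| ≤ C1)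
    (hloc : ∀ j, ∀ z : Ω, δ < ‖(z : EuclideanSpace ℝ (Fin d)) - x j‖ → φ j z = 0)
    (y : Fin N → Ω)
    (Φ : Matrix (Fin N) (Fin N) ℝ) (hΦdef : ∀ i j, Φ i j = φ j (y i))
    (hΦ : IsUnit Φ.det)
    (T : C(Ω, ℝ) →L[ℝ] C(Ω, ℝ))
    (hT : ∀ u : C(Ω, ℝ), T u = ∑ j, (Φ⁻¹ *ᵥ fun i => u (y i)) j • φ j) :
    ∀ u : C(Ω, ℝ), ‖T u - u‖ ≤ (1 + C1 * (⨆ i, ∑ j, |Φ⁻¹ i j|)) * C1 *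
      sSup {t | ∃ y' z' : Ω, ‖(y' : EuclideanSpace ℝ (Fin d)) - z'‖ ≤ δ ∧
        t = |u y' - u z'|} :=
  stmt_5_general Ω x φ m C1 δ hrep hstab hloc y Φ hΦdef hΦ T hT
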